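/- arXiv:1408.1178 — 2 statements merged into one kernel-verified Lean document; each statement's English description precedes it below -/
import Mathlib

section
/- (Values of the sub-Cuntz state with nonperiodic parameter.) Let n ≥ 2 and m ≥ 1, let S₁,…,Sₙ be a Cuntz family of order n on a complex Hilbert space H, let z be a nonperiodic unit vector in V_{n,m}, and let Ω ∈ H be a unit vector with s(z)Ω = Ω. Then for all words J, K over {1,…,n} (including the empty word): (1) if |J| and |K| are both nonnegative multiples of m, then ⟨Ω, S_J S_K* Ω⟩ = conj(z_J)·z_K, where for a word J of length a multiple of m one sets z_J := z_{J^{(1)}}···z_{J^{(l)}} with J = J^{(1)}···J^{(l)}, each |J^{(i)}| = m, and z_∅ := 1; (2) if |J| − |K| is not a multiple of m, then ⟨Ω, S_J S_K* Ω⟩ = 0; (3) otherwise, writing J = J₁J₂ and K = K₁K₂ with |J₁|, |K₁| nonnegative multiples of m and 1 ≤ |J₂| = |K₂| ≤ m−1, one has ⟨Ω, S_J S_K* Ω⟩ = conj(z_{J₁})·z_{K₁}·Σ_{|L|=m−|J₂|} conj(z_{J₂L})·z_{K₂L}. In particular, the values ⟨Ω, S_J S_K* Ω⟩ are uniquely determined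 by z. -/
noncomputable section

/-- `Vnm n m` is the Hilbert space `ℓ²({1,…,n}^m)`, identified with `(ℂ^n)^{⊗m}`. -/
abbrev Vnm (n m : ℕ) : Type := EuclideanSpace ℂ (Fin m → Fin n)

/-- The tensor product `x ⊗ y`, via `(x ⊗ y)_{JK} = x_J y_K`. -/
def tensV {n m l : ℕ} (x : Vnm n m) (y : Vnm n l) : Vnm n (m + l) :=
  WithLp.toLp 2 fun J => x (fun i => J (Fin.castAdd l i)) * y (fun i => J (Fin.natAdd m i))

/-- Re-indexing of a tensor along an equality of lengths. -/
def castV {n m m' : ℕ} (h : m = m') (z : Vnm n m) : Vnm n m' :=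
  WithLp.toLp 2 fun J => z (fun i => J (Fin.cast h i))

/-- The tensor power `x^{⊗p}`. -/
def tpowV {n m : ℕ} (x : Vnm n m) (p : ℕ) : Vnm n (p * m) :=
  WithLp.toLp 2 fun J => ∏ i : Fin p, x (fun t => J ⟨(i : ℕ) * m + (t : ℕ), by
    have h2 : (t : ℕ) < m := t.isLt
    have h1 : (i : ℕ) + 1 ≤ p := i.isLt
    have h3 : ((i : ℕ) + 1) * m = (i : ℕ) * m + m := by ring
    have h4 : ((i : ℕ) + 1) * m ≤ p * m := Nat.mul_le_mul_right m h1
    omega⟩)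

/-- The coordinatewise complex conjugate. -/
def conjV {n m : ℕ} (z : Vnm n m) : Vnm n m := WithLp.toLp 2 fun J => starRingEnd ℂ (z J)

/-- A unit vector `z` is periodic if `z = x^{⊗p}` for some unit vector `x` and `p ≥ 2`;
it is nonperiodic if it is not periodic. -/
def PeriodicV {n m : ℕ} (z : Vnm n m) : Prop :=
  ∃ (m' p : ℕ) (x : Vnm n m') (h : p * m' = m),
    ‖x‖ = 1 ∧ 2 ≤ p ∧ castV h (tpowV x p) = z

/-- The matricization of `z ∈ V_{n,b+a}` as an operator `V_{n,a} → V_{n,b}`,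
`(T z) e_K = Σ_{|J|=b} z_{JK} e_J`. -/
def matT {n b a : ℕ} (z : Vnm n (b + a)) :
    EuclideanSpace ℂ (Fin a → Fin n) →L[ℂ] EuclideanSpace ℂ (Fin b → Fin n) :=
  LinearMap.toContinuousLinearMap
    (Matrix.toEuclideanLin
      (Matrix.of fun (J : Fin b → Fin n) (K : Fin a → Fin n) => z (Fin.append J K)))

/-- The matricization `T_a(z) : V_{n,a} → V_{n,m-a}` of `z ∈ V_{n,m}`,
`T_a(z) e_K = Σ_{|J|=m−a} z_{JK} e_J`. -/
def Tmat {n m : ℕ} (a : ℕ) (h : a ≤ m) (z : Vnm n m) :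
    EuclideanSpace ℂ (Fin a → Fin n) →L[ℂ] EuclideanSpace ℂ (Fin (m - a) → Fin n) :=
  matT (castV (by omega : m = (m - a) + a) z)

/-- `z` is indecomposable if it is not a tensor product of lower-degree tensors. -/
def IndecomposableV {n m : ℕ} (z : Vnm n m) : Prop :=
  1 ≤ m ∧ ¬ ∃ (a b : ℕ) (h : a + b = m) (x : Vnm n a) (y : Vnm n b),
    1 ≤ a ∧ 1 ≤ b ∧ castV h (tensV x y) = z

/-- The iterated tensor product `x₁ ⊗ ⋯ ⊗ x_l` of homogeneous tensors of degrees `ms i`. -/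
def bigTensV {n l : ℕ} (ms : Fin l → ℕ) (xs : ∀ i, Vnm n (ms i)) : Vnm n (∑ i, ms i) :=
  WithLp.toLp 2 fun J => ∏ i : Fin l, xs i (fun t => J ⟨(∑ j ∈ Finset.Iio i, ms j) + (t : ℕ), by
    have h1 : (∑ j ∈ Finset.Iio i, ms j) + ms i ≤ ∑ j, ms j := by
      calc (∑ j ∈ Finset.Iio i, ms j) + ms i
          = ∑ j ∈ insert i (Finset.Iio i), ms j := by
            rw [Finset.sum_insert (by simp)]; ring
        _ ≤ ∑ j, ms j := Finset.sum_le_sum_of_subset (Finset.subset_univ _)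
    have h2 : (t : ℕ) < ms i := t.isLt
    omega⟩)

/-- `z ⊠ y ∈ V_{nn',m}`: `(z ⊠ y)_L = z_J y_K` where `L = J ⊠ K` is given by the
pairing `l_t = n'·j_t + k_t` of `{0,…,n−1}×{0,…,n'−1}` with `{0,…,nn'−1}`. -/
def boxTensV {n n' m : ℕ} (z : Vnm n m) (y : Vnm n' m) : Vnm (n * n') m :=
  WithLp.toLp 2 fun L =>
    z (fun t => ⟨(L t : ℕ) / n', by
        have h := (L t).isLt
        have hn' : 0 < n' := Nat.pos_of_ne_zero (by rintro rfl; simp at h)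
        exact (Nat.div_lt_iff_lt_mul hn').mpr h⟩) *
    y (fun t => ⟨(L t : ℕ) % n', by
        have h := (L t).isLt
        have hn' : 0 < n' := Nat.pos_of_ne_zero (by rintro rfl; simp at h)
        exact Nat.mod_lt _ hn'⟩)

/-- `z * y := z^{⊗α} ⊠ y^{⊗β} ∈ V_{nn',d}` where `d = αm = βl` is the lcm of `m` and `l`. -/
def starV {n n' m l : ℕ} (z : Vnm n m) (y : Vnm n' l) : Vnm (n * n') (Nat.lcm m l) :=
  boxTensV (castV (Nat.div_mul_cancel (Nat.dvd_lcm_left m l)) (tpowV z (Nat.lcm m l / m)))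
    (castV (Nat.div_mul_cancel (Nat.dvd_lcm_right m l)) (tpowV y (Nat.lcm m l / l)))

/-- Conjugacy of homogeneous tensors: `z = y`, or `z = x₁ ⊗ x₂` and `y = x₂ ⊗ x₁`
for some unit vectors `x₁, x₂`. -/
def ConjVec {n m l : ℕ} (z : Vnm n m) (y : Vnm n l) : Prop :=
  (∃ h : m = l, castV h z = y) ∨
    ∃ (a b : ℕ) (x₁ : Vnm n a) (x₂ : Vnm n b) (h₁ : a + b = m) (h₂ : b + a = l),
      ‖x₁‖ = 1 ∧ ‖x₂‖ = 1 ∧ castV h₁ (tensV x₁ x₂) = z ∧ castV h₂ (tensV x₂ x₁) = y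

/-- A Cuntz family of order `n` on `H`: `Sᵢ* Sⱼ = δᵢⱼ 1` and `Σᵢ Sᵢ Sᵢ* = 1`. -/
def IsCuntzFamily {H : Type*} [NormedAddCommGroup H] [InnerProductSpace ℂ H]
    [CompleteSpace H] {n : ℕ} (S : Fin n → H →L[ℂ] H) : Prop :=
  (∀ i j, (ContinuousLinearMap.adjoint (S i)).comp (S j) = if i = j then 1 else 0) ∧
    ∑ i, (S i).comp (ContinuousLinearMap.adjoint (S i)) = 1

/-- `S_J := S_{j₁} ∘ ⋯ ∘ S_{j_k}` for a word `J = (j₁,…,j_k)`, with `S_∅ = 1`. -/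
def Sword {H : Type*} [NormedAddCommGroup H] [InnerProductSpace ℂ H]
    {ι : Type*} (S : ι → H →L[ℂ] H) : (k : ℕ) → (Fin k → ι) → (H →L[ℂ] H)
  | 0, _ => 1
  | (k + 1), J => (S (J 0)).comp (Sword S k (fun i => J i.succ))

/-- `s(z) := Σ_{|J|=m} z_J S_J`. -/
def sop {H : Type*} [NormedAddCommGroup H] [InnerProductSpace ℂ H]
    {n m : ℕ} (S : Fin n → H →L[ℂ] H) (z : Vnm n m) : H →L[ℂ] H :=
  ∑ J : Fin m → Fin n, z J • Sword S m J

/-!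
Because `s(z) Ω = Ω` and the `Sᵢ` are isometries with orthogonal ranges, `S_J* Ω = z_J Ω` for
`|J| ∈ mℕ`, and more generally `S_J* Ω = Σ_L z_{JL} S_L Ω`; this gives (1) and (3) at once, and
reduces (2) to `⟨Ω, S_M Ω⟩ = 0` for `0 < |M| = d < m`. With `e = m - d`, the vector
`w = (⟨Ω, S_M Ω⟩)_{|M| = d}` satisfies `w = B A w`, where `A` and `B` are the matricizations of `z`
along `m = e + d` and of `conj z` along `m = d + e`, both of Hilbert–Schmidt norm `1`. If `w ≠ 0`,
equality in the Hilbert–Schmidt bound makes `A` and `B` rank one, that is `z = y ⊗ u = u ⊗ y`.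
As for words (Lyndon–Schützenberger), commuting tensors are multiples of powers of one tensor,
by Euclid's algorithm on `(d, e)`; so `z` would be periodic.
-/

open Finset
open scoped InnerProductSpace InnerProduct

section AppendCast

variable {X : Type*} {a b c : ℕ}

def appendCast (h : a + b = c) (P : Fin a → X) (Q : Fin b → X) : Fin c → X :=
  fun i => Fin.append P Q (Fin.cast h.symm i)

lemma appendCast_apply_of_lt (h : a + b = c) (P : Fin a → X) (Q : Fin b → X) {i : Fin c}
    (hi : (i : ℕ) < a) : appendCast h P Q i = P ⟨i, hi⟩ :=
  Fin.append_left P Q ⟨i, hi⟩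

lemma appendCast_apply_of_le (h : a + b = c) (P : Fin a → X) (Q : Fin b → X) {i : Fin c}
    (hi : a ≤ (i : ℕ)) : appendCast h P Q i = Q ⟨i - a, by omega⟩ := by
  have hi' : Fin.cast h.symm i = Fin.natAdd a ⟨i - a, by omega⟩ := Fin.ext (by simp; omega)
  rw [appendCast, hi', Fin.append_right]

def appendCastEquiv (h : a + b = c) : (Fin a → X) × (Fin b → X) ≃ (Fin c → X) :=
  (Fin.appendEquiv a b).trans ((finCongr h).arrowCongr (Equiv.refl X))

lemma sum_appendCast [Fintype X] [DecidableEq X] {M : Type*} [AddCommMonoid M]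
    (h : a + b = c) (F : (Fin c → X) → M) :
    ∑ W, F W = ∑ P, ∑ Q, F (appendCast h P Q) := by
  rw [← (appendCastEquiv h).sum_comp, Fintype.sum_prod_type]
  rfl

lemma appendCast_window (h : a + b = c) (f : ℕ → X) (o : ℕ) :
    (fun t : Fin c => f (o + t)) =
      appendCast h (fun t : Fin a => f (o + t)) (fun t : Fin b => f (o + a + t)) := by
  funext t
  by_cases ht : (t : ℕ) < a
  · rw [appendCast_apply_of_lt h _ _ ht]
  · rw [appendCast_apply_of_le h _ _ (not_lt.1 ht)]
    exact congrArg f (by simp; omega)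

end AppendCast

section Tensors

variable {n : ℕ}

lemma castV_apply {m m' : ℕ} (h : m = m') (z : Vnm n m) (J : Fin m' → Fin n) :
    castV h z J = z (fun i => J (Fin.cast h i)) := rfl

lemma norm_castV {m m' : ℕ} (h : m = m') (z : Vnm n m) : ‖castV h z‖ = ‖z‖ := by
  subst h
  rfl

lemma tensV_appendCast {m l c : ℕ} (h : m + l = c) (x : Vnm n m) (y : Vnm n l)
    (J : Fin m → Fin n) (K : Fin l → Fin n) :
    castV h (tensV x y) (appendCast h J K) = x J * y K := by
  subst h
  simp [castV, tensV, appendCast]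

lemma norm_tensV {m l : ℕ} (x : Vnm n m) (y : Vnm n l) : ‖tensV x y‖ = ‖x‖ * ‖y‖ := by
  rw [← norm_castV rfl, ← sq_eq_sq₀ (norm_nonneg _) (by positivity), mul_pow,
    EuclideanSpace.norm_sq_eq, EuclideanSpace.norm_sq_eq, EuclideanSpace.norm_sq_eq,
    sum_appendCast rfl, Finset.sum_mul_sum]
  simp only [tensV_appendCast, norm_mul, mul_pow]

lemma tpowV_zero_apply {m : ℕ} (z : Vnm n m) (J : Fin (0 * m) → Fin n) : tpowV z 0 J = 1 := by
  simp [tpowV]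

lemma tpowV_succ {m : ℕ} (z : Vnm n m) (a : ℕ) :
    tpowV z (a + 1) = castV (by ring) (tensV z (tpowV z a)) := by
  ext W
  simp only [tpowV, castV, tensV, PiLp.toLp_apply, Fin.prod_univ_succ]
  congr 1
  · exact congrArg z (funext fun t => congrArg W (Fin.ext (by simp)))
  · refine Finset.prod_congr rfl fun i _ => congrArg z (funext fun t => congrArg W ?_)
    exact Fin.ext (by simp; ring)

lemma norm_tpowV {m : ℕ} (x : Vnm n m) (p : ℕ) : ‖tpowV x p‖ = ‖x‖ ^ p := by
  induction p with
  | zero =>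
    rw [← sq_eq_sq₀ (norm_nonneg _) (by positivity), EuclideanSpace.norm_sq_eq]
    simp [tpowV_zero_apply]
  | succ p ih => rw [tpowV_succ, norm_castV, norm_tensV, ih, pow_succ']

def splitMat {a b c : ℕ} (h : a + b = c) (v : Vnm n c) :
    EuclideanSpace ℂ ((Fin a → Fin n) × (Fin b → Fin n)) :=
  WithLp.toLp 2 fun p => v (appendCast h p.1 p.2)

lemma norm_splitMat {a b c : ℕ} (h : a + b = c) (v : Vnm n c) : ‖splitMat h v‖ = ‖v‖ := by
  rw [← sq_eq_sq₀ (norm_nonneg _) (norm_nonneg _), EuclideanSpace.norm_sq_eq,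
    EuclideanSpace.norm_sq_eq, Fintype.sum_prod_type, sum_appendCast h]
  rfl

lemma norm_conjV {k : ℕ} (v : Vnm n k) : ‖conjV v‖ = ‖v‖ := by
  rw [← sq_eq_sq₀ (norm_nonneg _) (norm_nonneg _), EuclideanSpace.norm_sq_eq,
    EuclideanSpace.norm_sq_eq]
  simp [conjV]

end Tensors

section Words

variable {H : Type*} [NormedAddCommGroup H] [InnerProductSpace ℂ H]
variable {ι : Type*} (S : ι → H →L[ℂ] H)

lemma sword_of_eq_zero {k : ℕ} (hk : k = 0) (J : Fin k → ι) : Sword S k J = 1 := by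
  subst hk
  rfl

lemma sword_appendCast {k l c : ℕ} (h : k + l = c) (J : Fin k → ι) (K : Fin l → ι) :
    Sword S c (appendCast h J K) = (Sword S k J).comp (Sword S l K) := by
  induction k generalizing c with
  | zero =>
    obtain rfl : c = l := by omega
    rw [sword_of_eq_zero S rfl, ContinuousLinearMap.one_def, ContinuousLinearMap.id_comp]
    congr 1
    funext i
    rw [appendCast_apply_of_le h _ _ (Nat.zero_le _)]
    rfl
  | succ k ih =>
    obtain ⟨c, rfl⟩ : ∃ c', c = c' + 1 := ⟨k + l, by omega⟩
    have hJ0 : appendCast h J K 0 = J 0 := appendCast_apply_of_lt h J K (by simp)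
    have hsucc : (fun i : Fin c => appendCast h J K i.succ) =
        appendCast (by omega) (fun i : Fin k => J i.succ) K := by
      funext i
      by_cases hi : (i : ℕ) < k
      · rw [appendCast_apply_of_lt _ _ _ (by simpa using hi), appendCast_apply_of_lt _ _ _ hi]
        rfl
      · rw [appendCast_apply_of_le _ _ _ (by simp; omega), appendCast_apply_of_le _ _ _ (by omega)]
        exact congrArg K (Fin.ext (by simp))
    simp only [Sword, hJ0, hsucc, ih, ContinuousLinearMap.comp_assoc]

lemma sword_append {k l : ℕ} (J : Fin k → ι) (K : Fin l → ι) :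
    Sword S (k + l) (Fin.append J K) = (Sword S k J).comp (Sword S l K) :=
  sword_appendCast S rfl J K

end Words

section CuntzToeplitz

variable {H : Type*} [NormedAddCommGroup H] [InnerProductSpace ℂ H] [CompleteSpace H]
variable {ι : Type*} [DecidableEq ι]

def IsCuntzToeplitzFamily (S : ι → H →L[ℂ] H) : Prop :=
  ∀ i j, (S i)† ∘L S j = if i = j then 1 else 0

lemma IsCuntzFamily.isCuntzToeplitzFamily {n : ℕ} {S : Fin n → H →L[ℂ] H}
    (hS : IsCuntzFamily S) : IsCuntzToeplitzFamily S :=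
  hS.1

variable {S : ι → H →L[ℂ] H}

lemma IsCuntzToeplitzFamily.adjoint_sword_comp_sword (hS : IsCuntzToeplitzFamily S) {k : ℕ}
    (J K : Fin k → ι) : (Sword S k J)† ∘L Sword S k K = if J = K then 1 else 0 := by
  induction k with
  | zero =>
    simp [Subsingleton.elim J K, Sword, ContinuousLinearMap.one_def,
      ContinuousLinearMap.adjoint_id]
  | succ k ih =>
    have hcomp : (Sword S (k + 1) J)† ∘L Sword S (k + 1) K =
        (Sword S k (fun i => J i.succ))† ∘L ((S (J 0))† ∘L S (K 0)) ∘L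
          Sword S k (fun i => K i.succ) := by
      simp only [Sword, ContinuousLinearMap.adjoint_comp, ContinuousLinearMap.comp_assoc]
    rw [hcomp, hS]
    by_cases h0 : J 0 = K 0
    · simp only [h0, if_true, ContinuousLinearMap.one_def, ContinuousLinearMap.id_comp, ih]
      congr 1
      exact propext ⟨fun h => funext (Fin.cases h0 (congrFun h)), fun h => h ▸ rfl⟩
    · have hJK : J ≠ K := fun h => h0 (h ▸ rfl)
      simp [h0, hJK]

lemma IsCuntzToeplitzFamily.adjoint_sword_apply_sword (hS : IsCuntzToeplitzFamily S) {k : ℕ}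
    (J K : Fin k → ι) (v : H) : ((Sword S k J)†) (Sword S k K v) = if J = K then v else 0 := by
  rw [← ContinuousLinearMap.comp_apply, hS.adjoint_sword_comp_sword]
  split_ifs <;> rfl

lemma IsCuntzToeplitzFamily.inner_sword_sword (hS : IsCuntzToeplitzFamily S) {k : ℕ}
    (J K : Fin k → ι) (v v' : H) :
    ⟪Sword S k J v, Sword S k K v'⟫_ℂ = if J = K then ⟪v, v'⟫_ℂ else 0 := by
  rw [← ContinuousLinearMap.adjoint_inner_right, hS.adjoint_sword_apply_sword]
  split_ifs <;> simp

lemma IsCuntzToeplitzFamily.inner_sum_smul_sword [Fintype ι] (hS : IsCuntzToeplitzFamily S)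
    {k : ℕ} (a b : (Fin k → ι) → ℂ) (v : H) :
    ⟪∑ L, a L • Sword S k L v, ∑ L, b L • Sword S k L v⟫_ℂ =
      (∑ L, starRingEnd ℂ (a L) * b L) * ⟪v, v⟫_ℂ := by
  simp only [sum_inner, inner_sum, inner_smul_left, inner_smul_right, hS.inner_sword_sword,
    mul_ite, mul_zero, sum_ite_eq', mem_univ, if_true, sum_mul]
  exact sum_congr rfl fun L _ => by ring

end CuntzToeplitz

section FixedVector

variable {H : Type*} [NormedAddCommGroup H] [InnerProductSpace ℂ H]
variable {n M : ℕ}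

lemma sop_apply (S : Fin n → H →L[ℂ] H) (v : Vnm n M) (x : H) :
    sop S v x = ∑ W, v W • Sword S M W x := by
  simp [sop]

lemma sop_castV_tensV (S : Fin n → H →L[ℂ] H) {m l : ℕ} (h : m + l = M) (x : Vnm n m)
    (y : Vnm n l) : sop S (castV h (tensV x y)) = sop S x ∘L sop S y := by
  ext w
  simp only [ContinuousLinearMap.comp_apply, sop_apply, map_sum, map_smul, sum_appendCast h,
    tensV_appendCast, sword_appendCast, Finset.smul_sum, smul_smul]
  rw [Finset.sum_comm]
  simp only [mul_comm]

lemma sop_tpowV_zero_apply (S : Fin n → H →L[ℂ] H) {m : ℕ} (z : Vnm n m) (x : H) :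
    sop S (tpowV z 0) x = x := by
  simp [sop_apply, tpowV_zero_apply, sword_of_eq_zero S (zero_mul m)]

lemma sop_tpowV_apply_of_sop_fixed {S : Fin n → H →L[ℂ] H} {m : ℕ} {z : Vnm n m} {Ω : H}
    (hfix : sop S z Ω = Ω) (a : ℕ) : sop S (tpowV z a) Ω = Ω := by
  induction a with
  | zero => exact sop_tpowV_zero_apply S z Ω
  | succ a ih => rw [tpowV_succ, sop_castV_tensV, ContinuousLinearMap.comp_apply, ih, hfix]

variable [CompleteSpace H] {S : Fin n → H →L[ℂ] H} {v : Vnm n M} {Ω : H}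

lemma IsCuntzToeplitzFamily.adjoint_sword_apply_of_sop_fixed (hS : IsCuntzToeplitzFamily S)
    (hfix : sop S v Ω = Ω) (J : Fin M → Fin n) : ((Sword S M J)†) Ω = v J • Ω := by
  conv_lhs => rw [← hfix]
  simp [sop_apply, hS.adjoint_sword_apply_sword]

lemma IsCuntzToeplitzFamily.adjoint_sword_mul_apply {m : ℕ} {z : Vnm n m}
    (hS : IsCuntzToeplitzFamily S) (hfix : sop S z Ω = Ω) (a : ℕ) (J : Fin (a * m) → Fin n) :
    ((Sword S (a * m) J)†) Ω = tpowV z a J • Ω :=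
  hS.adjoint_sword_apply_of_sop_fixed (sop_tpowV_apply_of_sop_fixed hfix a) J

lemma IsCuntzToeplitzFamily.adjoint_sword_apply_eq_sum_of_sop_fixed
    (hS : IsCuntzToeplitzFamily S) (hfix : sop S v Ω = Ω) {k l : ℕ} (h : k + l = M)
    (J : Fin k → Fin n) : ((Sword S k J)†) Ω = ∑ L, v (appendCast h J L) • Sword S l L Ω := by
  conv_lhs => rw [← hfix]
  simp [sop_apply, sum_appendCast h, sword_appendCast, hS.adjoint_sword_apply_sword]

lemma IsCuntzToeplitzFamily.inner_sword_eq_sum_of_sop_fixed (hS : IsCuntzToeplitzFamily S)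
    (hfix : sop S v Ω = Ω) {k l : ℕ} (h : k + l = M) (J : Fin k → Fin n) :
    ⟪Ω, Sword S k J Ω⟫_ℂ =
      ∑ L, starRingEnd ℂ (v (appendCast h J L)) * starRingEnd ℂ ⟪Ω, Sword S l L Ω⟫_ℂ := by
  rw [← ContinuousLinearMap.adjoint_inner_left, hS.adjoint_sword_apply_eq_sum_of_sop_fixed hfix h,
    sum_inner]
  simp [inner_smul_left]

end FixedVector

section CommutingTensors

variable {n : ℕ}

-- Tensors are evaluated on windows of infinite words `ℕ → Fin n`, which keeps index casts out of
-- the word combinatorics below.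
def evalWindow {k : ℕ} (v : Vnm n k) (o : ℕ) (f : ℕ → Fin n) : ℂ :=
  v fun t => f (o + t)

lemma evalWindow_shift {k : ℕ} (v : Vnm n k) (o c : ℕ) (f : ℕ → Fin n) :
    evalWindow v o (fun s => f (c + s)) = evalWindow v (c + o) f :=
  congrArg v (funext fun t => congrArg f (by omega))

lemma evalWindow_congr {k : ℕ} (v : Vnm n k) {o : ℕ} {f f' : ℕ → Fin n}
    (h : ∀ t < k, f (o + t) = f' (o + t)) : evalWindow v o f = evalWindow v o f' :=
  congrArg v (funext fun t => h t t.isLt)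

lemma evalWindow_extend {k : ℕ} (v : Vnm n k) (W : Fin k → Fin n) (hk : 0 < k) :
    evalWindow v 0 (fun s => if hs : s < k then W ⟨s, hs⟩ else W ⟨0, hk⟩) = v W :=
  congrArg v (funext fun t => by simp)

lemma exists_apply_ne_zero {k : ℕ} {v : Vnm n k} (hv : v ≠ 0) : ∃ W, v W ≠ 0 := by
  by_contra! h
  exact hv (by ext W; exact h W)

/-- `u ⊗ y = y ⊗ u`. -/
def TensCommute {d e : ℕ} (u : Vnm n d) (y : Vnm n e) : Prop :=
  ∀ f, evalWindow u 0 f * evalWindow y d f = evalWindow y 0 f * evalWindow u e f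

/-- `v` is a scalar multiple of `x^{⊗a}`. -/
def IsScalarTPow {k g : ℕ} (v : Vnm n k) (x : Vnm n g) (a : ℕ) : Prop :=
  a * g = k ∧ ∃ α : ℂ, ∀ f, evalWindow v 0 f = α * ∏ i ∈ range a, evalWindow x (i * g) f

lemma TensCommute.symm {d e : ℕ} {u : Vnm n d} {y : Vnm n e} (h : TensCommute u y) :
    TensCommute y u :=
  fun f => (h f).symm

lemma IsScalarTPow.append {d e c g a b : ℕ} {u : Vnm n d} {y : Vnm n e} {w : Vnm n c}
    {x : Vnm n g} (hu : IsScalarTPow u x a) (hy : IsScalarTPow y x b) (hc : d + e = c)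
    (hw : ∀ f, evalWindow w 0 f = evalWindow u 0 f * evalWindow y d f) :
    IsScalarTPow w x (a + b) := by
  obtain ⟨hag, α, hα⟩ := hu
  obtain ⟨hbg, β, hβ⟩ := hy
  refine ⟨by rw [add_mul]; omega, α * β, fun f => ?_⟩
  have hyd : evalWindow y d f = β * ∏ i ∈ range b, evalWindow x ((a + i) * g) f := by
    have h := hβ fun s => f (d + s)
    simp only [evalWindow_shift, Nat.add_zero] at h
    rw [h]
    exact congrArg _ (prod_congr rfl fun i _ => by rw [add_mul, hag])
  rw [hw, hα, hyd, prod_range_add]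
  ring

lemma eq_of_evalWindow_mul_eq {d : ℕ} {u : Vnm n d} (hu : u ≠ 0) {A B : (ℕ → Fin n) → ℂ}
    (h : ∀ f, evalWindow u 0 f * A (fun s => f (d + s)) =
      evalWindow u 0 f * B (fun s => f (d + s))) : A = B := by
  obtain ⟨K, hK⟩ := exists_apply_ne_zero hu
  funext g
  let f : ℕ → Fin n := fun s => if hs : s < d then K ⟨s, hs⟩ else g (s - d)
  have hf : evalWindow u 0 f = u K := congrArg u (funext fun t => by simp [f])
  have hg : (fun s => f (d + s)) = g := funext fun s => by simp [f]
  have hfg := h f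
  rw [hf, hg] at hfg
  exact mul_left_cancel₀ hK hfg

lemma TensCommute.exists_left_factor {d e : ℕ} {u : Vnm n d} {y : Vnm n e}
    (H : TensCommute u y) (hu : u ≠ 0) (hde : d ≤ e) :
    ∃ y' : Vnm n (e - d), ∀ f, evalWindow y 0 f = evalWindow u 0 f * evalWindow y' d f := by
  obtain ⟨K, hK⟩ := exists_apply_ne_zero hu
  let y' : Vnm n (e - d) := WithLp.toLp 2 fun L => (u K)⁻¹ *
    y (fun t => if ht : (t : ℕ) < e - d then L ⟨t, ht⟩ else K ⟨t - (e - d), by omega⟩)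
  refine ⟨y', fun f => ?_⟩
  -- Evaluate `u ⊗ y = y ⊗ u` on `f` with the window `[e, e + d)` overwritten by `K`.
  let f' : ℕ → Fin n := fun s => if hs : e ≤ s ∧ s - e < d then K ⟨s - e, hs.2⟩ else f s
  have h₁ : evalWindow u 0 f' = evalWindow u 0 f :=
    evalWindow_congr u fun t ht => dif_neg (by omega)
  have h₂ : evalWindow y 0 f' = evalWindow y 0 f :=
    evalWindow_congr y fun t ht => dif_neg (by omega)
  have h₃ : evalWindow u e f' = u K := congrArg u (funext fun t => by simp [f'])
  have h₄ : evalWindow y d f' = u K * evalWindow y' d f := by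
    rw [evalWindow, evalWindow, PiLp.toLp_apply, ← mul_assoc, mul_inv_cancel₀ hK, one_mul]
    refine congrArg y (funext fun t => ?_)
    by_cases ht : (t : ℕ) < e - d
    · simp [f', ht, show ¬ e ≤ d + t by omega]
    · simp only [f', ht, dite_false, dif_pos (show e ≤ d + t ∧ d + t - e < d by omega)]
      exact congrArg K (Fin.ext (by simp; omega))
  have hf' := H f'
  rw [h₁, h₂, h₃, h₄] at hf'
  exact mul_right_cancel₀ hK (by linear_combination -hf')

lemma TensCommute.of_left_factor {d e : ℕ} {u : Vnm n d} {y : Vnm n e} {y' : Vnm n (e - d)}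
    (H : TensCommute u y) (hu : u ≠ 0) (hde : d ≤ e)
    (hy : ∀ f, evalWindow y 0 f = evalWindow u 0 f * evalWindow y' d f) :
    TensCommute u y' := by
  refine congrFun (eq_of_evalWindow_mul_eq hu (fun f => ?_))
  have hyd := hy fun s => f (d + s)
  simp only [evalWindow_shift, Nat.add_zero, Nat.add_sub_cancel' hde] at hyd ⊢
  linear_combination -evalWindow u 0 f * hyd + H f + evalWindow u e f * hy f

lemma TensCommute.exists_isScalarTPow {d e : ℕ} {u : Vnm n d} {y : Vnm n e}
    (H : TensCommute u y) (hu : u ≠ 0) (hy : y ≠ 0) :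
    ∃ (g : ℕ) (x : Vnm n g) (a b : ℕ), IsScalarTPow u x a ∧ IsScalarTPow y x b := by
  induction hN : d + e using Nat.strong_induction_on generalizing d e with
  | _ N ih =>
  wlog hde : d ≤ e generalizing d e u y
  · obtain ⟨g, x, a, b, hu', hy'⟩ := this H.symm hy hu (by omega) (by omega)
    exact ⟨g, x, b, a, hy', hu'⟩
  rcases Nat.eq_zero_or_pos d with rfl | hd
  · refine ⟨e, y, 0, 1, ⟨zero_mul e, u Fin.elim0, fun f => ?_⟩, ⟨one_mul e, 1, fun f => ?_⟩⟩
    · rw [range_zero, prod_empty, mul_one]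
      exact congrArg u (Subsingleton.elim _ _)
    · simp
  obtain ⟨y', hy'⟩ := H.exists_left_factor hu hde
  have hy'0 : y' ≠ 0 := by
    rintro rfl
    obtain ⟨W, hW⟩ := exists_apply_ne_zero hy
    apply hW
    rw [← evalWindow_extend y W (by omega), hy']
    simp [evalWindow]
  obtain ⟨g, x, a, b, hux, hy'x⟩ :=
    ih e (by omega) (H.of_left_factor hu hde hy') hu hy'0 (by omega)
  exact ⟨g, x, a, a + b, hux, hux.append hy'x (by omega) hy'⟩

lemma IsScalarTPow.periodicV {m g p : ℕ} {z : Vnm n m} {x : Vnm n g} (h : IsScalarTPow z x p)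
    (hz : ‖z‖ = 1) (hp : 2 ≤ p) (hm : 0 < m) : PeriodicV z := by
  obtain ⟨hpg, c, hc⟩ := h
  obtain ⟨ρ, hρ⟩ := IsAlgClosed.exists_pow_nat_eq c (by omega : 0 < p)
  have hcast : castV hpg (tpowV (ρ • x) p) = z := by
    ext W
    rw [← evalWindow_extend z W hm, hc, ← hρ, castV_apply, tpowV, PiLp.toLp_apply,
      ← Fin.prod_univ_eq_prod_range, ← Fin.prod_const p ρ, ← prod_mul_distrib]
    refine prod_congr rfl fun i _ => ?_
    rw [PiLp.smul_apply, smul_eq_mul]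
    refine congrArg _ (congrArg x (funext fun t => ?_))
    have hit : (i : ℕ) * g + t < m := by
      rw [← hpg]; nlinarith [i.isLt, t.isLt]
    simp [hit]
  have hnorm : ‖ρ • x‖ = 1 := by
    rw [← pow_eq_one_iff_of_nonneg (norm_nonneg _) (by omega : p ≠ 0), ← norm_tpowV,
      ← norm_castV hpg, hcast, hz]
  exact ⟨g, p, ρ • x, hpg, hnorm, hp, hcast⟩

lemma evalWindow_castV_tensV {d e c : ℕ} (h : d + e = c) (u : Vnm n d) (y : Vnm n e) (o : ℕ)
    (f : ℕ → Fin n) :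
    evalWindow (castV h (tensV u y)) o f = evalWindow u o f * evalWindow y (o + d) f := by
  rw [evalWindow, appendCast_window h, tensV_appendCast]
  rfl

lemma periodicV_of_castV_tensV_eq {d e m : ℕ} {z : Vnm n m} {u : Vnm n d} {y : Vnm n e}
    (hz : ‖z‖ = 1) (hd : 0 < d) (he : 0 < e) (hu : u ≠ 0) (hy : y ≠ 0) (hde : d + e = m)
    (hed : e + d = m) (huy : castV hde (tensV u y) = z) (hyu : castV hed (tensV y u) = z) :
    PeriodicV z := by
  have hz₁ (f : ℕ → Fin n) : evalWindow z 0 f = evalWindow u 0 f * evalWindow y d f := by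
    rw [← huy, evalWindow_castV_tensV, Nat.zero_add]
  have hz₂ (f : ℕ → Fin n) : evalWindow z 0 f = evalWindow y 0 f * evalWindow u e f := by
    rw [← hyu, evalWindow_castV_tensV, Nat.zero_add]
  obtain ⟨g, x, a, b, hux, hyx⟩ :=
    TensCommute.exists_isScalarTPow (fun f => (hz₁ f).symm.trans (hz₂ f)) hu hy
  have ha : a ≠ 0 := by rintro rfl; have := hux.1; omega
  have hb : b ≠ 0 := by rintro rfl; have := hyx.1; omega
  exact (hux.append hyx hde hz₁).periodicV hz (by omega) (by omega)

end CommutingTensors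

section HilbertSchmidt

variable {ι κ : Type*} [Fintype κ] [DecidableEq κ]

-- Vectors of `ℓ²(ι × κ)` act as matrices, and their norm is the Hilbert–Schmidt norm.
def matLin (A : EuclideanSpace ℂ (ι × κ)) : EuclideanSpace ℂ κ →ₗ[ℂ] EuclideanSpace ℂ ι :=
  Matrix.toEuclideanLin (Matrix.of fun i k => A (i, k))

lemma matLin_apply (A : EuclideanSpace ℂ (ι × κ)) (v : EuclideanSpace ℂ κ) (i : ι) :
    matLin A v i = ∑ k, A (i, k) * v k := rfl

lemma norm_matLin_le [Fintype ι] (A : EuclideanSpace ℂ (ι × κ)) (v : EuclideanSpace ℂ κ) :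
    ‖matLin A v‖ ≤ ‖A‖ * ‖v‖ := by
  rw [← sq_le_sq₀ (norm_nonneg _) (by positivity), mul_pow, EuclideanSpace.norm_sq_eq,
    EuclideanSpace.norm_sq_eq A, Fintype.sum_prod_type, sum_mul]
  refine sum_le_sum fun i _ => ?_
  let row : EuclideanSpace ℂ κ := WithLp.toLp 2 fun k => starRingEnd ℂ (A (i, k))
  have hrow : matLin A v i = ⟪row, v⟫_ℂ := by simp [matLin_apply, PiLp.inner_apply, row, mul_comm]
  have hnorm : ‖row‖ ^ 2 = ∑ k, ‖A (i, k)‖ ^ 2 := by simp [EuclideanSpace.norm_sq_eq, row]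
  rw [hrow, ← hnorm, ← mul_pow]
  exact pow_le_pow_left₀ (norm_nonneg _) (norm_inner_le_norm row v) 2

lemma eq_rankOne_of_norm_matLin_eq_one [Fintype ι] {A : EuclideanSpace ℂ (ι × κ)}
    {v : EuclideanSpace ℂ κ} (hA : ‖A‖ ≤ 1) (hv : ‖v‖ = 1) (hAv : ‖matLin A v‖ = 1) (i : ι)
    (k : κ) :
    A (i, k) = matLin A v i * starRingEnd ℂ (v k) := by
  -- Equality in Cauchy–Schwarz: `B = (Av) ⊗ conj v` is a unit vector with `⟪B, A⟫ = ‖Av‖² = 1`.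
  let B : EuclideanSpace ℂ (ι × κ) :=
    WithLp.toLp 2 fun p => matLin A v p.1 * starRingEnd ℂ (v p.2)
  have hBA : ⟪B, A⟫_ℂ = 1 := by
    have h : ⟪B, A⟫_ℂ = ⟪matLin A v, matLin A v⟫_ℂ := by
      simp only [PiLp.inner_apply, Fintype.sum_prod_type, B, RCLike.inner_apply, map_mul,
        Complex.conj_conj, matLin_apply]
      exact sum_congr rfl fun i _ => by rw [sum_mul]; exact sum_congr rfl fun k _ => by ring
    rw [h, inner_self_eq_norm_sq_to_K, hAv]
    norm_num
  have hB : ‖B‖ = 1 := by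
    rw [← pow_eq_one_iff_of_nonneg (norm_nonneg _) two_ne_zero, EuclideanSpace.norm_sq_eq,
      Fintype.sum_prod_type]
    simp only [B, norm_mul, RCLike.norm_conj, mul_pow, ← mul_sum, ← sum_mul,
      ← EuclideanSpace.norm_sq_eq, hAv, hv, one_pow, one_mul]
  have hA1 : ‖A‖ = 1 := by
    have h := norm_inner_le_norm (𝕜 := ℂ) B A
    rw [hBA, hB, norm_one, one_mul] at h
    exact le_antisymm hA h
  exact (congrArg (fun C : EuclideanSpace ℂ (ι × κ) => C (i, k))
    ((inner_eq_one_iff_of_norm_eq_one hB hA1).1 hBA)).symm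

lemma exists_rankOne_of_matLin_matLin_eq [Fintype ι] [DecidableEq ι]
    {A : EuclideanSpace ℂ (ι × κ)} {B : EuclideanSpace ℂ (κ × ι)} (hA : ‖A‖ ≤ 1) (hB : ‖B‖ ≤ 1)
    {w : EuclideanSpace ℂ κ} (hw : w ≠ 0) (h : matLin B (matLin A w) = w) :
    ∃ (x : EuclideanSpace ℂ κ) (y : EuclideanSpace ℂ ι), x ≠ 0 ∧ y ≠ 0 ∧
      (∀ i k, A (i, k) = y i * starRingEnd ℂ (x k)) ∧
      ∀ k i, B (k, i) = x k * starRingEnd ℂ (y i) := by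
  set x : EuclideanSpace ℂ κ := ((‖w‖ : ℂ)⁻¹) • w
  have hx : ‖x‖ = 1 := norm_smul_inv_norm hw
  have hBAx : matLin B (matLin A x) = x := by simp only [x, map_smul, h]
  have hAx : ‖matLin A x‖ = 1 := by
    refine le_antisymm ((norm_matLin_le A x).trans ?_) ?_
    · rw [hx, mul_one]
      exact hA
    · calc 1 = ‖matLin B (matLin A x)‖ := by rw [hBAx, hx]
        _ ≤ ‖B‖ * ‖matLin A x‖ := norm_matLin_le B _
        _ ≤ ‖matLin A x‖ := mul_le_of_le_one_left (norm_nonneg _) hB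
  have hBy := eq_rankOne_of_norm_matLin_eq_one hB hAx (by rw [hBAx, hx])
  rw [hBAx] at hBy
  exact ⟨x, matLin A x, norm_ne_zero_iff.1 (by rw [hx]; exact one_ne_zero),
    norm_ne_zero_iff.1 (by rw [hAx]; exact one_ne_zero),
    eq_rankOne_of_norm_matLin_eq_one hA hx hAx, hBy⟩

end HilbertSchmidt

section SubCuntzState

variable {H : Type*} [NormedAddCommGroup H] [InnerProductSpace ℂ H] [CompleteSpace H]
variable {n m : ℕ} {S : Fin n → H →L[ℂ] H} {z : Vnm n m} {Ω : H}

def stateVec (S : Fin n → H →L[ℂ] H) (Ω : H) (k : ℕ) : EuclideanSpace ℂ (Fin k → Fin n) :=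
  WithLp.toLp 2 fun M => ⟪Ω, Sword S k M Ω⟫_ℂ

lemma IsCuntzToeplitzFamily.stateVec_eq_of_sop_fixed (hS : IsCuntzToeplitzFamily S)
    (hfix : sop S z Ω = Ω) {k l : ℕ} (h : k + l = m) :
    stateVec S Ω k = conjV (matLin (splitMat h z) (stateVec S Ω l)) := by
  ext M
  simp [conjV, matLin_apply, splitMat, stateVec, hS.inner_sword_eq_sum_of_sop_fixed hfix h]

lemma IsCuntzToeplitzFamily.inner_sword_eq_zero_of_lt (hS : IsCuntzToeplitzFamily S)
    (hz : ‖z‖ = 1) (hznp : ¬ PeriodicV z) (hfix : sop S z Ω = Ω) {d : ℕ} (hd : 0 < d)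
    (hdm : d < m) (M : Fin d → Fin n) : ⟪Ω, Sword S d M Ω⟫_ℂ = 0 := by
  obtain ⟨e, rfl⟩ : ∃ e, m = d + e := ⟨m - d, by omega⟩
  have hed : e + d = d + e := add_comm e d
  suffices hw : stateVec S Ω d = 0 from congrArg (fun w => w M) hw
  by_contra hw
  have hfixed : matLin (splitMat rfl (conjV z)) (matLin (splitMat hed z) (stateVec S Ω d)) =
      stateVec S Ω d := by
    conv_rhs => rw [hS.stateVec_eq_of_sop_fixed (k := d) (l := e) hfix rfl,
      hS.stateVec_eq_of_sop_fixed hfix hed]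
    ext M
    simp [conjV, matLin_apply, splitMat]
  obtain ⟨x, y, hx, hy, hA, hB⟩ := exists_rankOne_of_matLin_matLin_eq
    (by rw [norm_splitMat, hz]) (by rw [norm_splitMat, norm_conjV, hz]) hw hfixed
  refine hznp (periodicV_of_castV_tensV_eq hz hd (by omega) (u := conjV x) ?_ hy rfl hed ?_ ?_)
  · rwa [← norm_ne_zero_iff, norm_conjV, norm_ne_zero_iff]
  · ext W
    obtain ⟨⟨M, J⟩, rfl⟩ := (appendCastEquiv rfl).surjective W
    have h := congrArg (starRingEnd ℂ) (hB M J)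
    simp only [splitMat, conjV, PiLp.toLp_apply, Complex.conj_conj, map_mul] at h
    exact (tensV_appendCast rfl _ _ M J).trans h.symm
  · ext W
    obtain ⟨⟨J, M⟩, rfl⟩ := (appendCastEquiv hed).surjective W
    exact (tensV_appendCast hed _ _ J M).trans (hA J M).symm

lemma IsCuntzToeplitzFamily.inner_sword_eq_zero_of_not_dvd (hS : IsCuntzToeplitzFamily S)
    (hm : 1 ≤ m) (hz : ‖z‖ = 1) (hznp : ¬ PeriodicV z) (hfix : sop S z Ω = Ω) {c : ℕ}
    (hc : ¬ m ∣ c) (M : Fin c → Fin n) : ⟪Ω, Sword S c M Ω⟫_ℂ = 0 := by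
  have hsplit : c / m * m + c % m = c := by rw [mul_comm]; exact Nat.div_add_mod c m
  obtain ⟨⟨M₁, M₂⟩, rfl⟩ := (appendCastEquiv hsplit).surjective M
  have hr : 0 < c % m := Nat.pos_of_ne_zero fun h => hc (Nat.dvd_of_mod_eq_zero h)
  change ⟪Ω, Sword S c (appendCast hsplit M₁ M₂) Ω⟫_ℂ = 0
  rw [sword_appendCast, ContinuousLinearMap.comp_apply, ← ContinuousLinearMap.adjoint_inner_left,
    hS.adjoint_sword_mul_apply hfix, inner_smul_left,
    hS.inner_sword_eq_zero_of_lt hz hznp hfix hr (Nat.mod_lt c hm) M₂, mul_zero]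

lemma IsCuntzToeplitzFamily.inner_sword_adjoint_sword_mul (hS : IsCuntzToeplitzFamily S)
    (hΩ : ‖Ω‖ = 1) (hfix : sop S z Ω = Ω) (a b : ℕ) (J : Fin (a * m) → Fin n)
    (K : Fin (b * m) → Fin n) :
    ⟪Ω, Sword S (a * m) J (((Sword S (b * m) K)†) Ω)⟫_ℂ =
      starRingEnd ℂ (tpowV z a J) * tpowV z b K := by
  rw [← ContinuousLinearMap.adjoint_inner_left, hS.adjoint_sword_mul_apply hfix,
    hS.adjoint_sword_mul_apply hfix, inner_smul_left, inner_smul_right,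
    inner_self_eq_norm_sq_to_K, hΩ]
  simp

lemma IsCuntzToeplitzFamily.inner_sword_adjoint_sword_eq_zero (hS : IsCuntzToeplitzFamily S)
    (hm : 1 ≤ m) (hz : ‖z‖ = 1) (hznp : ¬ PeriodicV z) (hfix : sop S z Ω = Ω) {k k' : ℕ}
    (hkk' : ¬ (m : ℤ) ∣ (k : ℤ) - (k' : ℤ)) (J : Fin k → Fin n) (K : Fin k' → Fin n) :
    ⟪Ω, Sword S k J (((Sword S k' K)†) Ω)⟫_ℂ = 0 := by
  have hk' : k' ≤ k' * m := Nat.le_mul_of_pos_right k' hm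
  have hlen : ¬ m ∣ k + (k' * m - k') := by
    intro hdvd
    apply hkk'
    have h := Int.natCast_dvd_natCast.2 hdvd
    rw [Nat.cast_add, Nat.cast_sub hk', Nat.cast_mul] at h
    have e : (k : ℤ) - k' = k + (k' * m - k') - k' * m := by ring
    rw [e]
    exact dvd_sub h (dvd_mul_left _ _)
  rw [hS.adjoint_sword_apply_eq_sum_of_sop_fixed (sop_tpowV_apply_of_sop_fixed hfix k')
    (Nat.add_sub_cancel' hk'), map_sum, inner_sum]
  refine sum_eq_zero fun L _ => ?_
  rw [map_smul, inner_smul_right, ← ContinuousLinearMap.comp_apply, ← sword_append,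
    hS.inner_sword_eq_zero_of_not_dvd hm hz hznp hfix hlen, mul_zero]

lemma IsCuntzToeplitzFamily.inner_sword_append_adjoint_sword_append
    (hS : IsCuntzToeplitzFamily S) (hΩ : ‖Ω‖ = 1) (hfix : sop S z Ω = Ω) {a b j : ℕ}
    (hj : j + (m - j) = m) (J₁ : Fin (a * m) → Fin n) (J₂ : Fin j → Fin n)
    (K₁ : Fin (b * m) → Fin n) (K₂ : Fin j → Fin n) :
    ⟪Ω, Sword S (a * m + j) (Fin.append J₁ J₂)
        (((Sword S (b * m + j) (Fin.append K₁ K₂))†) Ω)⟫_ℂ =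
      starRingEnd ℂ (tpowV z a J₁) * tpowV z b K₁ *
        ∑ L, starRingEnd ℂ (z (appendCast hj J₂ L)) * z (appendCast hj K₂ L) := by
  rw [← ContinuousLinearMap.adjoint_inner_left, sword_append, sword_append,
    ContinuousLinearMap.adjoint_comp, ContinuousLinearMap.adjoint_comp,
    ContinuousLinearMap.comp_apply, ContinuousLinearMap.comp_apply,
    hS.adjoint_sword_mul_apply hfix, hS.adjoint_sword_mul_apply hfix, map_smul, map_smul,
    inner_smul_left, inner_smul_right, hS.adjoint_sword_apply_eq_sum_of_sop_fixed hfix hj,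
    hS.adjoint_sword_apply_eq_sum_of_sop_fixed hfix hj, hS.inner_sum_smul_sword,
    inner_self_eq_norm_sq_to_K, hΩ]
  simp only [RCLike.ofReal_one, one_pow, mul_one, mul_assoc]

end SubCuntzState

/-- values of the sub-Cuntz state with nonperiodic parameter:
(1) if `|J|, |K|` are multiples of `m`, then `⟨Ω, S_J S_K* Ω⟩ = conj(z_J) z_K`;
(2) if `|J| − |K|` is not a multiple of `m`, then `⟨Ω, S_J S_K* Ω⟩ = 0`;
(3) otherwise, for `J = J₁J₂`, `K = K₁K₂` with `|J₁|, |K₁| ∈ mℤ≥0` and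
`1 ≤ |J₂| = |K₂| ≤ m−1`,
`⟨Ω, S_J S_K* Ω⟩ = conj(z_{J₁}) z_{K₁} Σ_{|L|=m−|J₂|} conj(z_{J₂L}) z_{K₂L}`. -/
theorem subCuntz_stmt16 {H : Type*} [NormedAddCommGroup H] [InnerProductSpace ℂ H]
    [CompleteSpace H] {n m : ℕ} (hm : 1 ≤ m)
    (S : Fin n → H →L[ℂ] H) (hS : IsCuntzFamily S)
    (z : Vnm n m) (hz : ‖z‖ = 1) (hznp : ¬ PeriodicV z)
    (Ω : H) (hΩ : ‖Ω‖ = 1) (hfix : sop S z Ω = Ω) :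
    (∀ (a b : ℕ) (J : Fin (a * m) → Fin n) (K : Fin (b * m) → Fin n),
      (inner ℂ Ω (Sword S (a * m) J
          (ContinuousLinearMap.adjoint (Sword S (b * m) K) Ω)) : ℂ)
        = starRingEnd ℂ (tpowV z a J) * tpowV z b K) ∧
    (∀ (k k' : ℕ), ¬ ((m : ℤ) ∣ ((k : ℤ) - (k' : ℤ))) →
      ∀ (J : Fin k → Fin n) (K : Fin k' → Fin n),
      (inner ℂ Ω (Sword S k J (ContinuousLinearMap.adjoint (Sword S k' K) Ω)) : ℂ) = 0) ∧
    (∀ (a b j : ℕ) (hj1 : 1 ≤ j) (hj2 : j ≤ m - 1)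
        (J₁ : Fin (a * m) → Fin n) (J₂ : Fin j → Fin n)
        (K₁ : Fin (b * m) → Fin n) (K₂ : Fin j → Fin n),
      (inner ℂ Ω (Sword S (a * m + j) (Fin.append J₁ J₂)
          (ContinuousLinearMap.adjoint (Sword S (b * m + j) (Fin.append K₁ K₂)) Ω)) : ℂ)
        = starRingEnd ℂ (tpowV z a J₁) * tpowV z b K₁ *
          ∑ L : Fin (m - j) → Fin n,
            starRingEnd ℂ
              (z (fun i => Fin.append J₂ L (Fin.cast (by omega : m = j + (m - j)) i))) *
            z (fun i => Fin.append K₂ L (Fin.cast (by omega : m = j + (m - j)) i))) := by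
  have hS' := hS.isCuntzToeplitzFamily
  refine ⟨fun a b J K => ?_, fun k k' hkk' J K => ?_, fun a b j _ hj J₁ J₂ K₁ K₂ => ?_⟩
  · exact hS'.inner_sword_adjoint_sword_mul hΩ hfix a b J K
  · exact hS'.inner_sword_adjoint_sword_eq_zero hm hz hznp hfix hkk' J K
  · exact hS'.inner_sword_append_adjoint_sword_append hΩ hfix (by omega) J₁ J₂ K₁ K₂
end
end

section
/- (Finitely versus infinitely correlated sub-Cuntz states on O_∞, Hilbert-space form.) Let H be a complex Hilbert space and (S_i)_{i∈ℕ} a sequence of bounded operators on H with S_i* S_j = δ_{ij} I for all i, j ∈ ℕ. Let x = (x_i)_{i∈ℕ} ∈ ℓ²(ℕ) be a unit vector, and let Ω ∈ H be a unit vector such that the series Σ_{i∈ℕ} x_i S_i S_i Ω converges to Ω and such that the linear span of {S_J S_K* Ω : J, K finite words over ℕ} is dense in H, where S_J := S_{j₁}···S_{j_k} for a word J = (j₁,…,j_k) and S_∅ := I. Let N := #{i ∈ ℕ : x_i ≠ 0}. Then the linear span of {S_J* Ω : J a finite word over ℕ} is finite-dimensional if and only if N < ∞. -/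
noncomputable section

/-! Applying `S_j*` to `Ω = Σᵢ xᵢ Sᵢ Sᵢ Ω` kills every term but one, so `S_j* Ω = x_j S_j Ω`.
Hence `span {Ω, S_j Ω : x_j ≠ 0}` is invariant under every `S_i*` and contains all `S_J* Ω`;
conversely, the span of the `S_J* Ω` contains the orthonormal vectors `S_j Ω` with `x_j ≠ 0`. -/

section WordAdjoints

open ContinuousLinearMap

variable {H : Type*} [NormedAddCommGroup H] [InnerProductSpace ℂ H]
  {ι : Type*} {S : ι → H →L[ℂ] H} {Ω : H}

theorem Sword_one (j : ι) : Sword S 1 (fun _ => j) = S j :=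
  (S j).comp_id

variable [CompleteSpace H]

def wordAdjointSpan (S : ι → H →L[ℂ] H) (Ω : H) : Submodule ℂ H :=
  Submodule.span ℂ {v : H | ∃ (k : ℕ) (J : Fin k → ι), v = adjoint (Sword S k J) Ω}

theorem adjoint_Sword_succ (k : ℕ) (J : Fin (k + 1) → ι) :
    adjoint (Sword S (k + 1) J) = adjoint (Sword S k fun i => J i.succ) ∘L adjoint (S (J 0)) :=
  adjoint_comp _ _

theorem adjoint_Sword_mem {M : Submodule ℂ H} (hM : ∀ i, ∀ v ∈ M, adjoint (S i) v ∈ M) :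
    ∀ (k : ℕ) (J : Fin k → ι) {v : H}, v ∈ M → adjoint (Sword S k J) v ∈ M
  | 0, _, v, hv => by simpa [Sword, one_def, adjoint_id] using hv
  | k + 1, J, v, hv => by
    rw [adjoint_Sword_succ, comp_apply]
    exact adjoint_Sword_mem hM k _ (hM _ v hv)

theorem adjoint_mem_wordAdjointSpan (j : ι) : adjoint (S j) Ω ∈ wordAdjointSpan S Ω :=
  Submodule.subset_span ⟨1, fun _ => j, by rw [Sword_one]⟩

section OrthogonalIsometries

variable [DecidableEq ι]

def IsOrthogonalIsometries (S : ι → H →L[ℂ] H) : Prop :=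
  ∀ i j, adjoint (S i) ∘L S j = if i = j then 1 else 0

theorem adjoint_apply_apply_eq_ite (hS : IsOrthogonalIsometries S) (i j : ι) (v : H) :
    adjoint (S i) (S j v) = if i = j then v else 0 := by
  simpa [apply_ite (fun A : H →L[ℂ] H => A v)] using
    congrArg (fun A : H →L[ℂ] H => A v) (hS i j)

theorem orthonormal_apply (hS : IsOrthogonalIsometries S) (hΩ : ‖Ω‖ = 1) :
    Orthonormal ℂ fun i => S i Ω := by
  rw [orthonormal_iff_ite]
  intro i j
  rw [← adjoint_inner_right, adjoint_apply_apply_eq_ite hS]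
  split_ifs
  · simp [hΩ]
  · exact inner_zero_right _

theorem adjoint_apply_eq_smul_of_hasSum (hS : IsOrthogonalIsometries S) {c : ι → ℂ}
    (hsum : HasSum (fun i => c i • S i (S i Ω)) Ω) (j : ι) :
    adjoint (S j) Ω = c j • S j Ω := by
  have hterm : (fun i => adjoint (S j) (c i • S i (S i Ω)))
      = fun i => if i = j then c j • S j Ω else 0 := by
    funext i
    rw [map_smul, adjoint_apply_apply_eq_ite hS]
    by_cases h : i = j
    · simp [h]
    · simp [h, Ne.symm h]
  have := (adjoint (S j)).hasSum hsum
  rw [hterm] at this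
  exact this.unique (hasSum_ite_eq j _)

theorem wordAdjointSpan_le_span (hS : IsOrthogonalIsometries S) {c : ι → ℂ}
    (hc : ∀ j, adjoint (S j) Ω = c j • S j Ω) :
    wordAdjointSpan S Ω ≤
      Submodule.span ℂ (insert Ω ((fun j => S j Ω) '' {j | c j ≠ 0})) := by
  set M := Submodule.span ℂ (insert Ω ((fun j => S j Ω) '' {j | c j ≠ 0}))
  have hΩM : Ω ∈ M := Submodule.subset_span (Set.mem_insert _ _)
  have hinv : ∀ i, ∀ v ∈ M, adjoint (S i) v ∈ M := by
    intro i v hv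
    refine Submodule.span_induction (fun w hw => ?_) (by simp)
      (fun _ _ _ _ h₁ h₂ => by rw [map_add]; exact M.add_mem h₁ h₂)
      (fun a _ _ h => by rw [map_smul]; exact M.smul_mem a h) hv
    rcases hw with rfl | ⟨j, -, rfl⟩
    · rw [hc]
      by_cases hci : c i = 0
      · simp [hci]
      · exact M.smul_mem _ (Submodule.subset_span (Set.mem_insert_of_mem _ ⟨i, hci, rfl⟩))
    · rw [adjoint_apply_apply_eq_ite hS]
      split_ifs
      exacts [hΩM, M.zero_mem]
  rw [wordAdjointSpan, Submodule.span_le]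
  rintro v ⟨k, J, rfl⟩
  exact adjoint_Sword_mem hinv k J hΩM

end OrthogonalIsometries

theorem apply_mem_wordAdjointSpan {c : ι → ℂ} (hc : ∀ j, adjoint (S j) Ω = c j • S j Ω)
    {j : ι} (hj : c j ≠ 0) : S j Ω ∈ wordAdjointSpan S Ω := by
  simpa [hc, smul_smul, hj] using
    (wordAdjointSpan S Ω).smul_mem (c j)⁻¹ (adjoint_mem_wordAdjointSpan (S := S) (Ω := Ω) j)

end WordAdjoints

open ContinuousLinearMap in
theorem subCuntz_stmt19_general {H : Type*} [NormedAddCommGroup H] [InnerProductSpace ℂ H]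
    [CompleteSpace H] (S : ℕ → H →L[ℂ] H)
    (hS : ∀ i j, (ContinuousLinearMap.adjoint (S i)).comp (S j) = if i = j then 1 else 0)
    (x : lp (fun _ : ℕ => ℂ) 2)
    (Ω : H) (hΩ : ‖Ω‖ = 1)
    (hsum : HasSum (fun i : ℕ => x i • (S i) ((S i) Ω)) Ω) :
    FiniteDimensional ℂ (Submodule.span ℂ
      {v : H | ∃ (k : ℕ) (J : Fin k → ℕ),
        v = ContinuousLinearMap.adjoint (Sword S k J) Ω}) ↔
    {i : ℕ | x i ≠ 0}.Finite := by
  change FiniteDimensional ℂ (wordAdjointSpan S Ω) ↔ _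
  have hc := adjoint_apply_eq_smul_of_hasSum hS hsum
  constructor
  · intro _
    let v : {i | x i ≠ 0} → wordAdjointSpan S Ω :=
      fun j => ⟨S j Ω, apply_mem_wordAdjointSpan hc j.2⟩
    have hv : LinearIndependent ℂ v := LinearIndependent.of_comp (wordAdjointSpan S Ω).subtype
      (((orthonormal_apply hS hΩ).comp _ Subtype.val_injective).linearIndependent)
    have := hv.finite
    exact Set.toFinite _
  · intro hfin
    have := FiniteDimensional.span_of_finite ℂ ((hfin.image fun j => S j Ω).insert Ω)
    exact Submodule.finiteDimensional_of_le (wordAdjointSpan_le_span hS hc)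

/-- finitely vs. infinitely correlated sub-Cuntz states on `O_∞`:
if `(S_i)_{i∈ℕ}` are isometries with mutually orthogonal ranges, `x ∈ ℓ²(ℕ)` is a unit
vector, `Ω` a cyclic unit vector with `Σᵢ xᵢ Sᵢ Sᵢ Ω = Ω`, then
`span {S_J* Ω}` is finite-dimensional iff `{i : x i ≠ 0}` is finite. -/
theorem subCuntz_stmt19 {H : Type*} [NormedAddCommGroup H] [InnerProductSpace ℂ H]
    [CompleteSpace H] (S : ℕ → H →L[ℂ] H)
    (hS : ∀ i j, (ContinuousLinearMap.adjoint (S i)).comp (S j) = if i = j then 1 else 0)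
    (x : lp (fun _ : ℕ => ℂ) 2) (hx : ‖x‖ = 1)
    (Ω : H) (hΩ : ‖Ω‖ = 1)
    (hsum : HasSum (fun i : ℕ => x i • (S i) ((S i) Ω)) Ω)
    (hcyc : Dense ((Submodule.span ℂ
      {v : H | ∃ (k k' : ℕ) (J : Fin k → ℕ) (K : Fin k' → ℕ),
        v = Sword S k J (ContinuousLinearMap.adjoint (Sword S k' K) Ω)} :
          Submodule ℂ H) : Set H)) :
    FiniteDimensional ℂ (Submodule.span ℂ
      {v : H | ∃ (k : ℕ) (J : Fin k → ℕ),
        v = ContinuousLinearMap.adjoint (Sword S k J) Ω}) ↔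
    {i : ℕ | x i ≠ 0}.Finite :=
  subCuntz_stmt19_general S hS x Ω hΩ hsum
end
end
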